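/- Let E be a vector lattice with the principal projection property, F a Dedekind complete vector lattice, Φ : 𝔅(E) → 𝔅(F) a Boolean homomorphism, and for every positive orthogonally additive operator T : E → F set R(T)(x) := inf { Σᵢ Φ(πᵢ)(T(πᵢ x)) : (πᵢ) ∈ 𝔇₀ }. Then R is additive on the positive cone: for all positive orthogonally additive operators T₁, T₂ : E → F and all x ∈ E, R(T₁ + T₂)(x) = R(T₁)(x) + R(T₂)(x). -/

import Mathlib

namespace VL

/-- Two elements of a vector lattice are disjoint if `|x| ⊓ |y| = 0`. -/
def VDisjoint {G : Type*} [Lattice G] [AddCommGroup G] (x y : G) : Prop :=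
  |x| ⊓ |y| = 0

/-- `y` is a fragment of `x` if `y ⊥ (x - y)`. -/
def Fragment {G : Type*} [Lattice G] [AddCommGroup G] (y x : G) : Prop :=
  VDisjoint y (x - y)

/-- An order projection: a linear idempotent `π` with `0 ≤ π x ≤ x` for all `x ≥ 0`. -/
def IsOrderProjection {G : Type*} [Lattice G] [AddCommGroup G] [Module ℝ G]
    (π : G →ₗ[ℝ] G) : Prop :=
  (∀ x, π (π x) = π x) ∧ ∀ x : G, 0 ≤ x → 0 ≤ π x ∧ π x ≤ x

/-- A map between the order projections of `E` and of `F` is a Boolean homomorphism if it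
maps order projections to order projections and preserves the Boolean operations
`π ∧ ρ = π ∘ ρ`, `π ∨ ρ = π + ρ - π ∘ ρ` and `compl π = Id - π`. -/
def IsBooleanHom {E F : Type*} [Lattice E] [AddCommGroup E] [Module ℝ E]
    [Lattice F] [AddCommGroup F] [Module ℝ F]
    (Φ : (E →ₗ[ℝ] E) → (F →ₗ[ℝ] F)) : Prop :=
  (∀ π, IsOrderProjection π → IsOrderProjection (Φ π)) ∧
  (∀ π ρ, IsOrderProjection π → IsOrderProjection ρ →
    Φ (π ∘ₗ ρ) = Φ π ∘ₗ Φ ρ) ∧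
  (∀ π ρ, IsOrderProjection π → IsOrderProjection ρ →
    Φ (π + ρ - π ∘ₗ ρ) = Φ π + Φ ρ - Φ π ∘ₗ Φ ρ) ∧
  (∀ π, IsOrderProjection π → Φ (LinearMap.id - π) = LinearMap.id - Φ π)

/-- `T` is atomic subordinate to `Φ` if `T (π x) = Φ(π) (T x)` for every order projection. -/
def IsAtomic {E F : Type*} [Lattice E] [AddCommGroup E] [Module ℝ E]
    [Lattice F] [AddCommGroup F] [Module ℝ F]
    (Φ : (E →ₗ[ℝ] E) → (F →ₗ[ℝ] F)) (T : E → F) : Prop :=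
  ∀ π : E →ₗ[ℝ] E, IsOrderProjection π → ∀ x : E, T (π x) = Φ π (T x)

/-- The principal projection property: for every `x` there is an order projection `π_x`
(the projection onto the band generated by `x`) such that `z - π_x z ⊥ x` for all `z`,
and `π_x z ⊥ w` whenever `w ⊥ x`. -/
def HasPPP (E : Type*) [Lattice E] [AddCommGroup E] [Module ℝ E] : Prop :=
  ∀ x : E, ∃ π : E →ₗ[ℝ] E, IsOrderProjection π ∧
    (∀ z : E, VDisjoint (z - π z) x) ∧
    (∀ z w : E, VDisjoint w x → VDisjoint (π z) w)

/-- Dedekind completeness: every nonempty set bounded above has a supremum. -/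
def DedekindComplete (F : Type*) [Lattice F] : Prop :=
  ∀ S : Set F, S.Nonempty → BddAbove S → ∃ b, IsLUB S b


variable {E F : Type*}
  [Lattice E] [AddCommGroup E] [Module ℝ E]
  [CovariantClass E E (· + ·) (· ≤ ·)] [PosSMulMono ℝ E]
  [Lattice F] [AddCommGroup F] [Module ℝ F]
  [CovariantClass F F (· + ·) (· ≤ ·)] [PosSMulMono ℝ F]

/-- A finite partition of the identity: finitely many pairwise disjoint order projections
summing to the identity. -/
def IsPartitionOfIdentity {E : Type*} [Lattice E] [AddCommGroup E] [Module ℝ E]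
    {n : ℕ} (π : Fin n → E →ₗ[ℝ] E) : Prop :=
  (∀ i, IsOrderProjection (π i)) ∧
  (∀ i j, i ≠ j → (π i) ∘ₗ (π j) = 0) ∧
  (∑ i, π i) = LinearMap.id

/-- The set `{ Σᵢ Φ(πᵢ)(T(πᵢ x)) : (πᵢ) ∈ 𝔇₀ }` of values at `x` of the operators
associated to finite partitions of the identity. -/
def atomicSumSet (Φ : (E →ₗ[ℝ] E) → (F →ₗ[ℝ] F)) (T : E → F) (x : E) : Set F :=
  {w : F | ∃ (n : ℕ) (π : Fin n → E →ₗ[ℝ] E), IsPartitionOfIdentity π ∧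
    w = ∑ i, Φ (π i) (T (π i x))}

/-!
The set for `T₁ + T₂` has the same lower bounds as the Minkowski sum of the sets for `T₁` and
`T₂`, so their infima add as in any ordered group. One inclusion is immediate. For the other,
passing from partitions `(πᵢ)`, `(ρⱼ)` to the common refinement `(πᵢ ∘ ρⱼ)` can only decrease the
sums: `Φ` is multiplicative, `Φ(ρⱼ) ≤ Id` on the positive cone and `T` is orthogonally additive,
so `Σⱼ Φ(πᵢρⱼ) T(πᵢρⱼ x) = Φ(πᵢ) Σⱼ Φ(ρⱼ) T(ρⱼπᵢ x) ≤ Φ(πᵢ) T(πᵢ x)`.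
-/

open scoped Pointwise

def OrthogonallyAdditive {G H : Type*} [Lattice G] [AddCommGroup G] [Add H] (T : G → H) : Prop :=
  ∀ x y, VDisjoint x y → T (x + y) = T x + T y

theorem OrthogonallyAdditive.map_zero {G H : Type*} [Lattice G] [AddCommGroup G] [AddCommGroup H]
    {T : G → H} (hT : OrthogonallyAdditive T) : T 0 = 0 := by
  simpa using (hT 0 0 (by simp [VDisjoint, abs])).symm

section Algebra

variable {G H : Type*} [AddCommGroup G] [Module ℝ G] [AddCommGroup H] [Module ℝ H] {n m : ℕ}

def commonRefinement (π : Fin n → G →ₗ[ℝ] G) (ρ : Fin m → G →ₗ[ℝ] G) :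
    Fin (n * m) → G →ₗ[ℝ] G :=
  fun k => π (finProdFinEquiv.symm k).1 ∘ₗ ρ (finProdFinEquiv.symm k).2

theorem sum_commonRefinement {M : Type*} [AddCommMonoid M] {π : Fin n → G →ₗ[ℝ] G}
    {ρ : Fin m → G →ₗ[ℝ] G} (f : (G →ₗ[ℝ] G) → M) :
    ∑ k, f (commonRefinement π ρ k) = ∑ i, ∑ j, f (π i ∘ₗ ρ j) := by
  rw [← Fintype.sum_prod_type']
  exact Fintype.sum_equiv finProdFinEquiv.symm _ _ fun k => rfl

def atomicSum (Φ : (G →ₗ[ℝ] G) → (H →ₗ[ℝ] H)) (T : G → H) (π : Fin n → G →ₗ[ℝ] G) (x : G) :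
    H :=
  ∑ i, Φ (π i) (T (π i x))

theorem atomicSum_add {Φ : (G →ₗ[ℝ] G) → (H →ₗ[ℝ] H)} {π : Fin n → G →ₗ[ℝ] G}
    (T₁ T₂ : G → H) (x : G) :
    atomicSum Φ (fun y => T₁ y + T₂ y) π x = atomicSum Φ T₁ π x + atomicSum Φ T₂ π x := by
  simp only [atomicSum, map_add, Finset.sum_add_distrib]

theorem atomicSumSet_add_subset [Lattice G] (Φ : (G →ₗ[ℝ] G) → (H →ₗ[ℝ] H)) (T₁ T₂ : G → H)
    (x : G) :
    atomicSumSet Φ (fun y => T₁ y + T₂ y) x ⊆ atomicSumSet Φ T₁ x + atomicSumSet Φ T₂ x := by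
  rintro _ ⟨n, π, hπ, rfl⟩
  exact ⟨_, ⟨n, π, hπ, rfl⟩, _, ⟨n, π, hπ, rfl⟩, (atomicSum_add T₁ T₂ x).symm⟩

end Algebra

section OrderProjection

variable {G : Type*} [Lattice G] [AddCommGroup G] [Module ℝ G]

namespace IsOrderProjection

variable [AddLeftMono G] {π ρ : G →ₗ[ℝ] G}

theorem monotone (hπ : IsOrderProjection π) : Monotone π := fun z w h =>
  sub_nonneg.1 <| by simpa only [map_sub] using (hπ.2 _ (sub_nonneg.2 h)).1

theorem apply_eq_self_of_le (hπ : IsOrderProjection π) {z w : G} (hz : 0 ≤ z) (hzw : z ≤ w)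
    (hw : π w = w) : π z = z := by
  have h : π (w - z) ≤ w - z := (hπ.2 _ (sub_nonneg.2 hzw)).2
  rw [map_sub, hw] at h
  exact le_antisymm (hπ.2 z hz).2 ((sub_le_sub_iff_left w).1 h)

theorem apply_apply_eq_inf (hπ : IsOrderProjection π) (hρ : IsOrderProjection ρ) {x : G}
    (hx : 0 ≤ x) : π (ρ x) = π x ⊓ ρ x := by
  refine le_antisymm (le_inf (hπ.monotone (hρ.2 x hx).2) (hπ.2 _ (hρ.2 x hx).1).2) ?_
  have hfix : π (π x ⊓ ρ x) = π x ⊓ ρ x :=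
    hπ.apply_eq_self_of_le (le_inf (hπ.2 x hx).1 (hρ.2 x hx).1) inf_le_left (hπ.1 x)
  calc π x ⊓ ρ x = π (π x ⊓ ρ x) := hfix.symm
    _ ≤ π (ρ x) := hπ.monotone inf_le_right

theorem apply_comm (hπ : IsOrderProjection π) (hρ : IsOrderProjection ρ) (x : G) :
    π (ρ x) = ρ (π x) := by
  have hpos : ∀ y : G, 0 ≤ y → π (ρ y) = ρ (π y) := fun y hy => by
    rw [hπ.apply_apply_eq_inf hρ hy, hρ.apply_apply_eq_inf hπ hy, inf_comm]
  rw [← posPart_sub_negPart x]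
  simp only [map_sub, hpos _ (posPart_nonneg x), hpos _ (negPart_nonneg x)]

theorem comp_comm (hπ : IsOrderProjection π) (hρ : IsOrderProjection ρ) :
    π ∘ₗ ρ = ρ ∘ₗ π :=
  LinearMap.ext (hπ.apply_comm hρ)

theorem comp (hπ : IsOrderProjection π) (hρ : IsOrderProjection ρ) :
    IsOrderProjection (π ∘ₗ ρ) := by
  refine ⟨fun x => ?_, fun x hx => ?_⟩
  · simp only [LinearMap.comp_apply]
    rw [hρ.apply_comm hπ (ρ x), hρ.1, hπ.1]
  · exact ⟨(hπ.2 _ (hρ.2 x hx).1).1, (hπ.2 _ (hρ.2 x hx).1).2.trans (hρ.2 x hx).2⟩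

theorem abs_apply_le (hπ : IsOrderProjection π) (z : G) : |π z| ≤ π |z| :=
  sup_le (hπ.monotone (le_abs_self z)) (by simpa only [map_neg] using hπ.monotone (neg_le_abs z))

theorem vDisjoint_apply_of_comp_eq_zero (hπ : IsOrderProjection π) (hρ : IsOrderProjection ρ)
    (h : π ∘ₗ ρ = 0) (z : G) : VDisjoint (π z) (ρ z) := by
  refine le_antisymm ?_ (le_inf (abs_nonneg _) (abs_nonneg _))
  calc |π z| ⊓ |ρ z| ≤ π |z| ⊓ ρ |z| := inf_le_inf (hπ.abs_apply_le z) (hρ.abs_apply_le z)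
    _ = (π ∘ₗ ρ) |z| := (hπ.apply_apply_eq_inf hρ (abs_nonneg z)).symm
    _ = 0 := by rw [h, LinearMap.zero_apply]

end IsOrderProjection

namespace IsPartitionOfIdentity

variable {n m : ℕ} {π : Fin n → G →ₗ[ℝ] G} {ρ : Fin m → G →ₗ[ℝ] G}

theorem sum_apply (hρ : IsPartitionOfIdentity ρ) (x : G) : ∑ j, ρ j x = x := by
  rw [← LinearMap.sum_apply, hρ.2.2, LinearMap.id_apply]

theorem comp_sum_of_mem (hρ : IsPartitionOfIdentity ρ) {s : Finset (Fin m)} {j : Fin m}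
    (hj : j ∈ s) : ρ j ∘ₗ ∑ l ∈ s, ρ l = ρ j := by
  ext x
  rw [LinearMap.comp_apply, LinearMap.sum_apply, map_sum, Finset.sum_eq_single_of_mem j hj]
  · exact (hρ.1 j).1 x
  · intro l _ hlj
    rw [← LinearMap.comp_apply, hρ.2.1 j l hlj.symm, LinearMap.zero_apply]

theorem comp_sum_of_notMem (hρ : IsPartitionOfIdentity ρ) {s : Finset (Fin m)} {j : Fin m}
    (hj : j ∉ s) : ρ j ∘ₗ ∑ l ∈ s, ρ l = 0 := by
  ext x
  rw [LinearMap.comp_apply, LinearMap.sum_apply, map_sum, LinearMap.zero_apply]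
  refine Finset.sum_eq_zero fun l hl => ?_
  rw [← LinearMap.comp_apply, hρ.2.1 j l (ne_of_mem_of_not_mem hl hj).symm,
    LinearMap.zero_apply]

variable [AddLeftMono G]

theorem isOrderProjection_sum (hρ : IsPartitionOfIdentity ρ) (s : Finset (Fin m)) :
    IsOrderProjection (∑ j ∈ s, ρ j) := by
  have hnonneg : ∀ t : Finset (Fin m), ∀ x : G, 0 ≤ x → 0 ≤ (∑ j ∈ t, ρ j) x := fun t x hx => by
    rw [LinearMap.sum_apply]
    exact Finset.sum_nonneg fun j _ => ((hρ.1 j).2 x hx).1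
  refine ⟨fun x => ?_, fun x hx => ⟨hnonneg s x hx, ?_⟩⟩
  · calc (∑ j ∈ s, ρ j) ((∑ l ∈ s, ρ l) x) = ∑ j ∈ s, (ρ j ∘ₗ ∑ l ∈ s, ρ l) x :=
          LinearMap.sum_apply _ _ _
      _ = ∑ j ∈ s, ρ j x := Finset.sum_congr rfl fun j hj => by rw [hρ.comp_sum_of_mem hj]
      _ = (∑ j ∈ s, ρ j) x := (LinearMap.sum_apply _ _ _).symm
  · calc (∑ j ∈ s, ρ j) x ≤ (∑ j ∈ s, ρ j) x + (∑ j ∈ sᶜ, ρ j) x :=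
          le_add_of_nonneg_right (hnonneg sᶜ x hx)
      _ = x := by rw [← LinearMap.add_apply, Finset.sum_add_sum_compl, hρ.2.2, LinearMap.id_apply]

theorem map_eq_sum {H : Type*} [AddCommGroup H] {T : G → H} (hρ : IsPartitionOfIdentity ρ)
    (hT : OrthogonallyAdditive T) (y : G) : T y = ∑ j, T (ρ j y) := by
  have hpartial : ∀ s : Finset (Fin m), T ((∑ j ∈ s, ρ j) y) = ∑ j ∈ s, T (ρ j y) := by
    intro s
    induction s using Finset.induction_on with
    | empty => simpa using hT.map_zero
    | @insert k s hk ih =>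
      have hdisj : VDisjoint (ρ k y) ((∑ j ∈ s, ρ j) y) :=
        (hρ.1 k).vDisjoint_apply_of_comp_eq_zero (hρ.isOrderProjection_sum s)
          (hρ.comp_sum_of_notMem hk) y
      rw [Finset.sum_insert hk, LinearMap.add_apply, hT _ _ hdisj, ih, Finset.sum_insert hk]
  simpa [hρ.2.2] using hpartial Finset.univ

theorem commonRefinement (hπ : IsPartitionOfIdentity π) (hρ : IsPartitionOfIdentity ρ) :
    IsPartitionOfIdentity (commonRefinement π ρ) := by
  refine ⟨fun k => (hπ.1 _).comp (hρ.1 _), fun k k' hkk' => ?_, ?_⟩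
  · set p := finProdFinEquiv.symm k
    set q := finProdFinEquiv.symm k'
    have hpq : p ≠ q := finProdFinEquiv.symm.injective.ne hkk'
    ext x
    simp only [VL.commonRefinement, LinearMap.comp_apply, LinearMap.zero_apply]
    rw [(hρ.1 p.2).apply_comm (hπ.1 q.1)]
    by_cases h₁ : p.1 = q.1
    · have h₂ : p.2 ≠ q.2 := fun h₂ => hpq (Prod.ext h₁ h₂)
      rw [← LinearMap.comp_apply (ρ p.2), hρ.2.1 _ _ h₂, LinearMap.zero_apply, map_zero, map_zero]
    · rw [← LinearMap.comp_apply (π p.1), hπ.2.1 _ _ h₁, LinearMap.zero_apply]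
  · rw [sum_commonRefinement fun τ => τ]
    ext x
    simp only [LinearMap.sum_apply, LinearMap.comp_apply, ← map_sum, hρ.sum_apply, hπ.sum_apply,
      LinearMap.id_apply]

end IsPartitionOfIdentity

end OrderProjection

section AtomicSum

variable {G H : Type*} [Lattice G] [AddCommGroup G] [Module ℝ G] [AddLeftMono G]
  [Lattice H] [AddCommGroup H] [Module ℝ H] [AddLeftMono H]
  {Φ : (G →ₗ[ℝ] G) → (H →ₗ[ℝ] H)} {T : G → H} {n m : ℕ}
  {π : Fin n → G →ₗ[ℝ] G} {ρ : Fin m → G →ₗ[ℝ] G}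

theorem atomicSum_comp_le (hΦ : IsBooleanHom Φ) (hT : ∀ x, 0 ≤ T x)
    (hTo : OrthogonallyAdditive T) {p : G →ₗ[ℝ] G} (hp : IsOrderProjection p)
    (hρ : IsPartitionOfIdentity ρ) (x : G) :
    atomicSum Φ T (fun j => p ∘ₗ ρ j) x ≤ Φ p (T (p x)) :=
  calc atomicSum Φ T (fun j => p ∘ₗ ρ j) x = Φ p (∑ j, Φ (ρ j) (T (ρ j (p x)))) := by
        rw [atomicSum, map_sum]
        refine Finset.sum_congr rfl fun j _ => ?_
        rw [hΦ.2.1 _ _ hp (hρ.1 j), LinearMap.comp_apply, LinearMap.comp_apply,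
          hp.apply_comm (hρ.1 j)]
    _ ≤ Φ p (∑ j, T (ρ j (p x))) :=
        (hΦ.1 p hp).monotone (Finset.sum_le_sum fun j _ => ((hΦ.1 _ (hρ.1 j)).2 _ (hT _)).2)
    _ = Φ p (T (p x)) := by rw [← hρ.map_eq_sum hTo]

theorem atomicSum_commonRefinement_le_left (hΦ : IsBooleanHom Φ) (hT : ∀ x, 0 ≤ T x)
    (hTo : OrthogonallyAdditive T) (hπ : IsPartitionOfIdentity π) (hρ : IsPartitionOfIdentity ρ)
    (x : G) : atomicSum Φ T (commonRefinement π ρ) x ≤ atomicSum Φ T π x :=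
  (sum_commonRefinement fun τ => Φ τ (T (τ x))).trans_le
    (Finset.sum_le_sum fun i _ => atomicSum_comp_le hΦ hT hTo (hπ.1 i) hρ x)

theorem atomicSum_commonRefinement_le_right (hΦ : IsBooleanHom Φ) (hT : ∀ x, 0 ≤ T x)
    (hTo : OrthogonallyAdditive T) (hπ : IsPartitionOfIdentity π) (hρ : IsPartitionOfIdentity ρ)
    (x : G) : atomicSum Φ T (commonRefinement π ρ) x ≤ atomicSum Φ T ρ x := by
  have hcomm : ∀ i j, π i ∘ₗ ρ j = ρ j ∘ₗ π i := fun i j => (hπ.1 i).comp_comm (hρ.1 j)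
  calc atomicSum Φ T (commonRefinement π ρ) x
      = ∑ i, ∑ j, Φ (π i ∘ₗ ρ j) (T ((π i ∘ₗ ρ j) x)) :=
        sum_commonRefinement fun τ => Φ τ (T (τ x))
    _ = ∑ j, atomicSum Φ T (fun i => ρ j ∘ₗ π i) x := by
        rw [Finset.sum_comm]
        simp only [atomicSum, hcomm]
    _ ≤ atomicSum Φ T ρ x :=
        Finset.sum_le_sum fun j _ => atomicSum_comp_le hΦ hT hTo (hρ.1 j) hπ x

theorem isCoinitialFor_atomicSumSet_add (hΦ : IsBooleanHom Φ) {T₁ T₂ : G → H}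
    (hT₁ : ∀ x, 0 ≤ T₁ x) (hT₁o : OrthogonallyAdditive T₁)
    (hT₂ : ∀ x, 0 ≤ T₂ x) (hT₂o : OrthogonallyAdditive T₂) (x : G) :
    IsCoinitialFor (atomicSumSet Φ T₁ x + atomicSumSet Φ T₂ x)
      (atomicSumSet Φ (fun y => T₁ y + T₂ y) x) := by
  rintro _ ⟨_, ⟨n, π, hπ, rfl⟩, _, ⟨m, ρ, hρ, rfl⟩, rfl⟩
  refine ⟨_, ⟨n * m, commonRefinement π ρ, hπ.commonRefinement hρ, rfl⟩, ?_⟩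
  exact (atomicSum_add T₁ T₂ x).trans_le
    (add_le_add (atomicSum_commonRefinement_le_left hΦ hT₁ hT₁o hπ hρ x)
      (atomicSum_commonRefinement_le_right hΦ hT₂ hT₂o hπ hρ x))

end AtomicSum

theorem atomic_projection_additive_general
    (Φ : (E →ₗ[ℝ] E) → (F →ₗ[ℝ] F)) (hΦ : IsBooleanHom Φ)
    (T₁ T₂ : E → F)
    (hT₁pos : ∀ x : E, 0 ≤ T₁ x)
    (hT₁oa : ∀ x y : E, VDisjoint x y → T₁ (x + y) = T₁ x + T₁ y)
    (hT₂pos : ∀ x : E, 0 ≤ T₂ x)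
    (hT₂oa : ∀ x y : E, VDisjoint x y → T₂ (x + y) = T₂ x + T₂ y) :
    ∀ x : E, ∀ a b : F, IsGLB (atomicSumSet Φ T₁ x) a → IsGLB (atomicSumSet Φ T₂ x) b →
      IsGLB (atomicSumSet Φ (fun y => T₁ y + T₂ y) x) (a + b) := by
  intro x a b ha hb
  have hbounds : lowerBounds (atomicSumSet Φ (fun y => T₁ y + T₂ y) x) =
      lowerBounds (atomicSumSet Φ T₁ x + atomicSumSet Φ T₂ x) :=
    (lowerBounds_mono_of_isCoinitialFor
      (isCoinitialFor_atomicSumSet_add hΦ hT₁pos hT₁oa hT₂pos hT₂oa x)).antisymm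
      (lowerBounds_mono_set (atomicSumSet_add_subset Φ T₁ T₂ x))
  exact (isGLB_congr hbounds).2 (ha.add hb)

/-- the map `T ↦ R(T)`, `R(T)(x) = inf { Σᵢ Φ(πᵢ)(T(πᵢ x)) }`, is additive on
the positive cone of orthogonally additive operators. -/
theorem atomic_projection_additive
    (hE : HasPPP E) (hF : DedekindComplete F)
    (Φ : (E →ₗ[ℝ] E) → (F →ₗ[ℝ] F)) (hΦ : IsBooleanHom Φ)
    (T₁ T₂ : E → F)
    (hT₁pos : ∀ x : E, 0 ≤ T₁ x)
    (hT₁oa : ∀ x y : E, VDisjoint x y → T₁ (x + y) = T₁ x + T₁ y)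
    (hT₂pos : ∀ x : E, 0 ≤ T₂ x)
    (hT₂oa : ∀ x y : E, VDisjoint x y → T₂ (x + y) = T₂ x + T₂ y) :
    ∀ x : E, ∀ a b : F, IsGLB (atomicSumSet Φ T₁ x) a → IsGLB (atomicSumSet Φ T₂ x) b →
      IsGLB (atomicSumSet Φ (fun y => T₁ y + T₂ y) x) (a + b) :=
  atomic_projection_additive_general Φ hΦ T₁ T₂ hT₁pos hT₁oa hT₂pos hT₂oa

end VL
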